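/- Let G be a directed acyclic graph and let i and j be two distinct non-adjacent vertices of G. Then pa(i) d-separates i and j in G, or pa(j) d-separates i and j in G; specifically, pa(i) d-separates them whenever j is not a descendant of i, and since G is acyclic at least one of i, j is not a descendant of the other. -/

import Mathlib

open Filter MeasureTheory ProbabilityTheory

universe u

/-- A mixed graph: each ordered pair of vertices may carry a directed edge `dir i j`
(drawn `i → j`) or a bidirected edge `bidir i j` (drawn `i ↔ j`). -/
structure MixedGraph (V : Type u) where
  dir : V → V → Prop
  bidir : V → V → Prop

namespace MixedGraph

variable {V : Type u}

/-- There is a bidirected edge between `i` and `j` (symmetrized). -/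
def Bidir (G : MixedGraph V) (i j : V) : Prop := G.bidir i j ∨ G.bidir j i

/-- `i` and `j` are adjacent: joined by some edge. -/
def Adj (G : MixedGraph V) (i j : V) : Prop := G.dir i j ∨ G.dir j i ∨ G.Bidir i j

/-- The edge between `a` and `k` has an arrowhead at `k`. -/
def ArrowAt (G : MixedGraph V) (a k : V) : Prop := G.dir a k ∨ G.Bidir a k

/-- `i` is an ancestor of `j`: `i = j` or there is a directed path from `i` to `j`. -/
def Ancestor (G : MixedGraph V) (i j : V) : Prop := Relation.ReflTransGen G.dir i j

/-- `G` contains a directed cycle: an edge `i → j` with `j` an ancestor of `i`. -/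
def DirectedCycle (G : MixedGraph V) : Prop := ∃ i j, G.dir i j ∧ G.Ancestor j i

/-- `G` contains an almost directed cycle: an edge `i ↔ j` with `j` an ancestor of `i`. -/
def AlmostDirectedCycle (G : MixedGraph V) : Prop := ∃ i j, G.Bidir i j ∧ G.Ancestor j i

/-- `G` is ancestral: no directed cycles and no almost directed cycles. -/
def Ancestral (G : MixedGraph V) : Prop := ¬ G.DirectedCycle ∧ ¬ G.AlmostDirectedCycle

/-- The graph is a well-formed mixed graph: no self-loops and at most one
edge between any pair of distinct vertices. -/
def WellFormed (G : MixedGraph V) : Prop :=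
  (∀ i, ¬ G.dir i i) ∧ (∀ i, ¬ G.bidir i i) ∧
  (∀ i j, G.dir i j → ¬ G.dir j i) ∧ ∀ i j, G.dir i j → ¬ G.Bidir i j

/-- A path: a list of at least two distinct vertices, consecutive ones adjacent. -/
def IsPath (G : MixedGraph V) (π : List V) : Prop :=
  π.Chain' G.Adj ∧ π.Nodup ∧ 2 ≤ π.length

/-- A path between `i` and `j`. -/
def IsPathBetween (G : MixedGraph V) (π : List V) (i j : V) : Prop :=
  G.IsPath π ∧ π.head? = some i ∧ π.getLast? = some j

/-- `k`, with neighbours `a` and `b` on a path, is a collider: both incident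
edges of the path have an arrowhead at `k`. -/
def ColliderTriple (G : MixedGraph V) (a k b : V) : Prop := G.ArrowAt a k ∧ G.ArrowAt b k

/-- `π` is an inducing path between `i` and `j` relative to `L`: every vertex on `π`
other than `i`, `j` and members of `L` is a collider on `π` and an ancestor of `i` or `j`. -/
def IsInducingPathRel (G : MixedGraph V) (L : Set V) (i j : V) (π : List V) : Prop :=
  G.IsPathBetween π i j ∧
  ∀ m a k b, π[m]? = some a → π[m+1]? = some k → π[m+2]? = some b → k ∉ L →
    G.ColliderTriple a k b ∧ (G.Ancestor k i ∨ G.Ancestor k j)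

/-- An inducing path (relative to the empty set). -/
def IsInducingPath (G : MixedGraph V) (i j : V) (π : List V) : Prop :=
  G.IsInducingPathRel ∅ i j π

/-- `π` is m-connecting between `i` and `j` given `S`: every collider on `π` is an
ancestor of some member of `S`, and every non-collider is outside `S`. -/
def MConnecting (G : MixedGraph V) (S : Set V) (i j : V) (π : List V) : Prop :=
  G.IsPathBetween π i j ∧
  ∀ m a k b, π[m]? = some a → π[m+1]? = some k → π[m+2]? = some b →
    (G.ColliderTriple a k b → ∃ d ∈ S, G.Ancestor k d) ∧
    (¬ G.ColliderTriple a k b → k ∉ S)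

/-- `S` m-separates `i` and `j` in `G` (for a DAG this is d-separation). -/
def MSep (G : MixedGraph V) (S : Set V) (i j : V) : Prop :=
  ∀ π : List V, ¬ G.MConnecting S i j π

/-- `G` is a DAG: all edges are directed and there are no directed cycles. -/
def IsDAG (G : MixedGraph V) : Prop :=
  (∀ i j, ¬ G.bidir i j) ∧ ∀ i j, G.dir i j → ¬ G.Ancestor j i

/-- Maximality: no inducing path between non-adjacent vertices. -/
def MaximalAG (G : MixedGraph V) : Prop :=
  ∀ i j, i ≠ j → ¬ G.Adj i j → ∀ π, ¬ G.IsInducingPath i j π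

/-- `G` is a maximal ancestral graph. -/
def IsMAG (G : MixedGraph V) : Prop := G.Ancestral ∧ G.MaximalAG

/-- Parents. -/
def pa (G : MixedGraph V) (i : V) : Set V := {j | G.dir j i}
/-- Children. -/
def ch (G : MixedGraph V) (i : V) : Set V := {j | G.dir i j}
/-- Spouses: non-adjacent vertices sharing a child with `i`. -/
def spo (G : MixedGraph V) (i : V) : Set V :=
  {j | j ≠ i ∧ ¬ G.Adj i j ∧ ∃ c, G.dir i c ∧ G.dir j c}
/-- Markov blanket. -/
def mb (G : MixedGraph V) (i : V) : Set V := G.pa i ∪ G.ch i ∪ G.spo i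
/-- Neighborhood of a target node. -/
def NB (G : MixedGraph V) (t : V) : Set V := G.mb t ∪ {t}

variable (G : MixedGraph V) (T : Set V)

/-- `N`: the union of the target neighborhoods. -/
def Nset : Set V := ⋃ t ∈ T, G.NB t

/-- `L = V ∖ N`: the (graphically) latent vertices. -/
def Lset : Set V := (Nset G T)ᶜ

/-- `(i,j) ∈ B`: a between-neighborhood pair, i.e. a pair of vertices of `N` not
belonging to any common target neighborhood. -/
def BetweenPair (i j : V) : Prop :=
  i ∈ Nset G T ∧ j ∈ Nset G T ∧ ∀ t ∈ T, ¬ (i ∈ G.NB t ∧ j ∈ G.NB t)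

/-- `i` and `j` are joined in `G` by an inducing path relative to `L`. -/
def IndConn (i j : V) : Prop :=
  ∃ π, G.IsInducingPathRel (Lset G T) i j π ∨ G.IsInducingPathRel (Lset G T) j i π

/-- The graph `G*_N`: the induced subgraph of `G` on `N`, plus, for each
between-neighborhood pair joined in `G` by an inducing path relative to `L`,
an added edge oriented `i → j` if `i ∈ an_G(j)`, `j → i` if `j ∈ an_G(i)`,
and `i ↔ j` otherwise. -/
def GStar : MixedGraph V where
  dir i j := (i ∈ Nset G T ∧ j ∈ Nset G T ∧ G.dir i j) ∨
    (BetweenPair G T i j ∧ IndConn G T i j ∧ G.Ancestor i j)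
  bidir i j := BetweenPair G T i j ∧ IndConn G T i j ∧
    ¬ G.Ancestor i j ∧ ¬ G.Ancestor j i

/-- Assumption 1: there is no inducing path relative to `L` between two nodes of the
same neighborhood `NB_t` on which some intermediate node lies in `N ∖ NB_t`. -/
def Assumption1 : Prop :=
  ∀ t ∈ T, ∀ i ∈ G.NB t, ∀ j ∈ G.NB t, ∀ π : List V,
    G.IsInducingPathRel (Lset G T) i j π →
    ∀ m k, m + 2 < π.length → π[m+1]? = some k → k ∈ Nset G T → k ∈ G.NB t

/-- The marginal MAG `M(G, N)`: distinct `i, j ∈ N` are adjacent iff joined in `G` by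
an inducing path relative to `L`, oriented by ancestry in `G`. -/
def MarginalMAG : MixedGraph V where
  dir i j := i ∈ Nset G T ∧ j ∈ Nset G T ∧ i ≠ j ∧ IndConn G T i j ∧ G.Ancestor i j
  bidir i j := i ∈ Nset G T ∧ j ∈ Nset G T ∧ i ≠ j ∧ IndConn G T i j ∧
    ¬ G.Ancestor i j ∧ ¬ G.Ancestor j i

end MixedGraph

section Statements

open MixedGraph Filter MeasureTheory ProbabilityTheory

lemma adj_symm' {V : Type u} (G : MixedGraph V) {a b : V} (h : G.Adj a b) : G.Adj b a := by
  rcases h with h | h | h | h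
  · exact Or.inr (Or.inl h)
  · exact Or.inl h
  · exact Or.inr (Or.inr (Or.inr h))
  · exact Or.inr (Or.inr (Or.inl h))

lemma mconn_reverse' {V : Type u} (G : MixedGraph V) (S : Set V) {i j : V} {π : List V}
    (h : G.MConnecting S i j π) : G.MConnecting S j i π.reverse := by
  obtain ⟨⟨⟨hchain, hnodup, hlen⟩, hhead, hlast⟩, hcoll⟩ := h
  refine ⟨⟨⟨?_, ?_, ?_⟩, ?_, ?_⟩, ?_⟩
  · refine List.isChain_reverse.mpr ?_
    exact hchain.imp (fun a b hab => adj_symm' G hab)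
  · exact List.nodup_reverse.mpr hnodup
  · simpa using hlen
  · rw [List.head?_reverse]; exact hlast
  · rw [List.getLast?_reverse]; exact hhead
  · intro m a k b ha hk hb
    have hm2 : m + 2 < π.length := by
      by_contra hcon
      rw [List.getElem?_eq_none (by simpa using Nat.le_of_not_lt hcon)] at hb
      exact nomatch hb
    rw [List.getElem?_reverse (by omega)] at ha hk hb
    have e1 : π.length - 1 - m = (π.length - 3 - m) + 2 := by omega
    have e2 : π.length - 1 - (m + 1) = (π.length - 3 - m) + 1 := by omega
    have e3 : π.length - 1 - (m + 2) = π.length - 3 - m := by omega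
    rw [e1] at ha; rw [e2] at hk; rw [e3] at hb
    have := hcoll (π.length - 3 - m) b k a hb hk ha
    exact ⟨fun hc => this.1 ⟨hc.2, hc.1⟩, fun hc => this.2 (fun hc' => hc ⟨hc'.2, hc'.1⟩)⟩

lemma msep_symm' {V : Type u} (G : MixedGraph V) (S : Set V) {i j : V}
    (h : G.MSep S i j) : G.MSep S j i :=
  fun π hc => h π.reverse (mconn_reverse' G S hc)

lemma dag_anc_antisymm {V : Type u} (G : MixedGraph V) (hG : G.IsDAG) {i j : V}
    (hij : G.Ancestor i j) (hji : G.Ancestor j i) : i = j := by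
  rcases Relation.ReflTransGen.cases_head hij with rfl | ⟨k, hik, hkj⟩
  · rfl
  · exact absurd (hkj.trans hji) (hG.2 i k hik)

lemma key_lemma {V : Type u} (G : MixedGraph V) (hG : G.IsDAG) (i j : V)
    (hnadj : ¬ G.Adj i j) (hanc : ¬ G.Ancestor i j) : G.MSep (G.pa i) i j := by
  intro π hc
  obtain ⟨⟨⟨hchain, hnodup, hlen⟩, hhead, hlast⟩, hcoll⟩ := hc
  rw [List.head?_eq_getElem?] at hhead
  rw [List.getLast?_eq_getElem?] at hlast
  have h0lt : 0 < π.length := by omega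
  have hi0 : π[0]'h0lt = i := by
    rw [List.getElem?_eq_getElem h0lt] at hhead
    exact Option.some.inj hhead
  have hjlast : π[π.length - 1]'(by omega) = j := by
    rw [List.getElem?_eq_getElem (by omega)] at hlast
    exact Option.some.inj hlast
  have hadj : ∀ m (hm : m + 1 < π.length), G.Adj (π[m]'(by omega)) (π[m+1]'(by omega)) := by
    intro m hm
    have := List.isChain_iff_getElem.mp hchain m (by omega)
    simpa using this
  -- rule out length 2
  have hlen3 : 3 ≤ π.length := by
    rcases Nat.lt_or_ge π.length 3 with h3 | h3
    · exfalso
      have h2 : π.length = 2 := by omega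
      have := hadj 0 (by omega)
      rw [hi0] at this
      have hj1 : π[1]'(by omega) = j := by
        rw [show π.length - 1 = 1 from by omega] at hlast
        rw [List.getElem?_eq_getElem (by omega : 1 < π.length)] at hlast
        exact Option.some.inj hlast
      rw [hj1] at this
      exact hnadj this
    · exact h3
  have main : ∀ k, (h : k + 1 < π.length) →
      G.dir (π[k]'(by omega)) (π[k+1]'(by omega)) ∧ G.Ancestor i (π[k+1]'(by omega)) := by
    intro k
    induction k with
    | zero =>
      intro h1
      rcases hadj 0 h1 with hd | hd | hd
      · rw [hi0] at hd
        refine ⟨by rwa [hi0], Relation.ReflTransGen.single hd⟩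
      · exfalso
        rw [hi0] at hd
        have hnc := (hcoll 0 (π[0]'h0lt) (π[1]'(by omega)) (π[2]'(by omega))
          (List.getElem?_eq_getElem _) (List.getElem?_eq_getElem (by omega))
          (List.getElem?_eq_getElem (by omega))).2
        have hncol : ¬ G.ColliderTriple (π[0]'h0lt) (π[1]'(by omega)) (π[2]'(by omega)) := by
          intro hcol
          rcases hcol.1 with harr | harr
          · rw [hi0] at harr
            exact hG.2 _ _ hd (Relation.ReflTransGen.single harr)
          · rw [hi0] at harr
            rcases harr with hb | hb
            · exact hG.1 _ _ hb
            · exact hG.1 _ _ hb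
        exact hnc hncol hd
      · rw [hi0] at hd
        rcases hd with hb | hb
        · exact absurd hb (hG.1 _ _)
        · exact absurd hb (hG.1 _ _)
    | succ k ih =>
      intro h2
      obtain ⟨ihd, ihanc⟩ := ih (by omega)
      rcases hadj (k+1) h2 with hd | hd | hd
      · exact ⟨hd, ihanc.trans (Relation.ReflTransGen.single hd)⟩
      · exfalso
        have hcolk := (hcoll k (π[k]'(by omega)) (π[k+1]'(by omega)) (π[k+2]'(by omega))
          (List.getElem?_eq_getElem (by omega)) (List.getElem?_eq_getElem (by omega))
          (List.getElem?_eq_getElem (by omega))).1 ⟨Or.inl ihd, Or.inl hd⟩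
        obtain ⟨d, hd_pa, hanc_d⟩ := hcolk
        exact hG.2 d i hd_pa (ihanc.trans hanc_d)
      · rcases hd with hb | hb
        · exact absurd hb (hG.1 _ _)
        · exact absurd hb (hG.1 _ _)
  have hfin := (main (π.length - 2) (by omega)).2
  have e : π.length - 2 + 1 = π.length - 1 := by omega
  have h1 : π[π.length - 1]? = some (π[π.length - 2 + 1]'(by omega)) := by
    conv_lhs => rw [← e]
    exact List.getElem?_eq_getElem (by omega)
  rw [hlast] at h1
  have heq : π[π.length - 2 + 1]'(by omega) = j := (Option.some.inj h1).symm
  rw [heq] at hfin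
  exact hanc hfin

theorem stmt8 {V : Type u} [Fintype V] (G : MixedGraph V) (hG : G.IsDAG)
    (i j : V) (hne : i ≠ j) (hnadj : ¬ G.Adj i j) :
    (G.MSep (G.pa i) i j ∨ G.MSep (G.pa j) i j) ∧
    (¬ G.Ancestor i j → G.MSep (G.pa i) i j) ∧
    (¬ G.Ancestor i j ∨ ¬ G.Ancestor j i) := by
  have third : ¬ G.Ancestor i j ∨ ¬ G.Ancestor j i := by
    by_contra h
    push_neg at h
    exact hne (dag_anc_antisymm G hG h.1 h.2)
  refine ⟨?_, fun h => key_lemma G hG i j hnadj h, third⟩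
  rcases third with h | h
  · exact Or.inl (key_lemma G hG i j hnadj h)
  · exact Or.inr (msep_symm' G _ (key_lemma G hG j i (fun ha => hnadj (adj_symm' G ha)) h))

end Statements
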